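/- arXiv:2303.14096 — 4 statements merged into one kernel-verified Lean document; each statement's English description precedes it below -/
import Mathlib

section
/- Let x, x̂, y, ε be random variables taking values in finite nonempty types on a common probability space, with ε independent of the pair (x̂, y), and suppose I(x; y) = I(x̂; y). Let f₀ be a function and define (ẑ, ẑₙ) := f₀(x̂, ε). Assume (a) H(x̂ | (ẑ, ẑₙ)) = 0, and (b) ẑₙ is independent of the pair (ẑ, y) (in particular I(ẑₙ; y) = 0 and ẑ is independent of ẑₙ). Then I(ẑ; y) = I(x; y). -/
open Classical Finset Real

/-- `μ` is a probability mass function on the finite type `Ω`. -/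
def IsPMF {Ω : Type*} [Fintype Ω] (μ : Ω → ℝ) : Prop :=
  (∀ ω, 0 ≤ μ ω) ∧ ∑ ω, μ ω = 1

open Classical in
/-- Probability that the random variable `X` takes the value `a`, under `μ`. -/
noncomputable def pr {Ω α : Type*} [Fintype Ω] (μ : Ω → ℝ) (X : Ω → α) (a : α) : ℝ :=
  ∑ ω, if X ω = a then μ ω else 0

/-- Shannon entropy `H(X)` (natural logarithm). -/
noncomputable def ent {Ω α : Type*} [Fintype Ω] [Fintype α] (μ : Ω → ℝ) (X : Ω → α) : ℝ :=
  -∑ a, pr μ X a * Real.log (pr μ X a)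

/-- Conditional entropy `H(X | Y) := H(X, Y) - H(Y)`. -/
noncomputable def condEnt {Ω α β : Type*} [Fintype Ω] [Fintype α] [Fintype β]
    (μ : Ω → ℝ) (X : Ω → α) (Y : Ω → β) : ℝ :=
  ent μ (fun ω => (X ω, Y ω)) - ent μ Y

/-- Mutual information `I(X; Y) := H(X) + H(Y) - H(X, Y)`. -/
noncomputable def mi {Ω α β : Type*} [Fintype Ω] [Fintype α] [Fintype β]
    (μ : Ω → ℝ) (X : Ω → α) (Y : Ω → β) : ℝ :=
  ent μ X + ent μ Y - ent μ (fun ω => (X ω, Y ω))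

/-- Conditional mutual information
`I(X; Y | Z) := H(X, Z) + H(Y, Z) - H(X, Y, Z) - H(Z)`. -/
noncomputable def condMI {Ω α β γ : Type*} [Fintype Ω] [Fintype α] [Fintype β] [Fintype γ]
    (μ : Ω → ℝ) (X : Ω → α) (Y : Ω → β) (Z : Ω → γ) : ℝ :=
  ent μ (fun ω => (X ω, Z ω)) + ent μ (fun ω => (Y ω, Z ω))
    - ent μ (fun ω => ((X ω, Y ω), Z ω)) - ent μ Z

/-- Independence of the random variables `X` and `Y` under `μ`. -/
def IndepRV {Ω α β : Type*} [Fintype Ω] (μ : Ω → ℝ) (X : Ω → α) (Y : Ω → β) : Prop :=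
  ∀ a b, pr μ (fun ω => (X ω, Y ω)) (a, b) = pr μ X a * pr μ Y b

/-- Kullback–Leibler divergence between pmfs on a finite type (natural logarithm). -/
noncomputable def KL {α : Type*} [Fintype α] (p q : α → ℝ) : ℝ :=
  ∑ x, p x * Real.log (p x / q x)

/-- Jensen–Shannon divergence between pmfs on a finite type. -/
noncomputable def JSD {α : Type*} [Fintype α] (p q : α → ℝ) : ℝ :=
  (1 / 2) * KL p (fun x => (p x + q x) / 2) + (1 / 2) * KL q (fun x => (p x + q x) / 2)


section nibHelpers

variable {Ω α β γ : Type*} [Fintype Ω] {μ : Ω → ℝ}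

private lemma pr_nonneg (h0 : ∀ ω, 0 ≤ μ ω) (X : Ω → α) (a : α) : 0 ≤ pr μ X a := by
  apply Finset.sum_nonneg
  intro ω _
  split <;> simp [h0 ω]

private lemma pr_eq_of_iff {X : Ω → α} {X' : Ω → β} {a : α} {a' : β}
    (h : ∀ ω, X ω = a ↔ X' ω = a') : pr μ X a = pr μ X' a' := by
  unfold pr
  exact Finset.sum_congr rfl fun ω _ => by rw [if_congr (h ω) rfl rfl]

private lemma pr_marg_right (X : Ω → α) (Y : Ω → β) (a : α) [Fintype β] :
    ∑ b, pr μ (fun ω => (X ω, Y ω)) (a, b) = pr μ X a := by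
  unfold pr
  rw [Finset.sum_comm]
  refine Finset.sum_congr rfl fun ω _ => ?_
  by_cases h : X ω = a <;> simp [h, Prod.ext_iff]

private lemma pr_marg_left (X : Ω → α) (Y : Ω → β) (b : β) [Fintype α] :
    ∑ a, pr μ (fun ω => (X ω, Y ω)) (a, b) = pr μ Y b := by
  unfold pr
  rw [Finset.sum_comm]
  refine Finset.sum_congr rfl fun ω _ => ?_
  by_cases h : Y ω = b <;> simp [h, Prod.ext_iff]

private lemma pr_total (h1 : ∑ ω, μ ω = 1) (X : Ω → α) [Fintype α] : ∑ a, pr μ X a = 1 := by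
  unfold pr
  rw [Finset.sum_comm, ← h1]
  exact Finset.sum_congr rfl fun ω _ => by simp

private lemma ent_comp [Fintype α] [Fintype β] (X : Ω → α) (e : α → β)
    (he : Function.Injective e) :
    ent μ (fun ω => e (X ω)) = ent μ X := by
  unfold ent
  congr 1
  have key : ∀ a, pr μ (fun ω => e (X ω)) (e a) = pr μ X a := fun a =>
    pr_eq_of_iff fun ω => ⟨fun h => he h, fun h => by rw [h]⟩
  have key0 : ∀ b, b ∉ Finset.univ.image e → pr μ (fun ω => e (X ω)) b = 0 := by
    intro b hb
    apply Finset.sum_eq_zero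
    intro ω _
    rw [if_neg]
    intro h
    exact hb (Finset.mem_image.2 ⟨X ω, Finset.mem_univ _, h⟩)
  rw [← Finset.sum_subset (Finset.subset_univ (Finset.univ.image e))
    (fun b _ hb => by rw [key0 b hb]; simp)]
  rw [Finset.sum_image (fun a _ a' _ h => he h)]
  exact Finset.sum_congr rfl fun a _ => by rw [key]

private lemma ent_assoc [Fintype α] [Fintype β] [Fintype γ] (X : Ω → α) (Y : Ω → β) (Z : Ω → γ) :
    ent μ (fun ω => ((X ω, Y ω), Z ω)) = ent μ (fun ω => (X ω, (Y ω, Z ω))) :=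
  (ent_comp (fun ω => ((X ω, Y ω), Z ω)) (Equiv.prodAssoc α β γ)
    (Equiv.prodAssoc α β γ).injective).symm

private lemma ent_swap [Fintype α] [Fintype β] (X : Ω → α) (Y : Ω → β) :
    ent μ (fun ω => (X ω, Y ω)) = ent μ (fun ω => (Y ω, X ω)) :=
  ent_comp (fun ω => (Y ω, X ω)) (Equiv.prodComm β α) (Equiv.prodComm β α).injective

private lemma ent_indep [Fintype α] [Fintype β] (h0 : ∀ ω, 0 ≤ μ ω) (h1 : ∑ ω, μ ω = 1)
    (X : Ω → α) (Y : Ω → β) (h : IndepRV μ X Y) :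
    ent μ (fun ω => (X ω, Y ω)) = ent μ X + ent μ Y := by
  unfold ent
  rw [Fintype.sum_prod_type]
  have key : ∀ a b, pr μ (fun ω => (X ω, Y ω)) (a, b) *
      Real.log (pr μ (fun ω => (X ω, Y ω)) (a, b))
      = pr μ Y b * (pr μ X a * Real.log (pr μ X a))
        + pr μ X a * (pr μ Y b * Real.log (pr μ Y b)) := by
    intro a b
    rw [h a b]
    rcases eq_or_lt_of_le (pr_nonneg h0 X a) with hx | hx
    · simp [← hx]
    rcases eq_or_lt_of_le (pr_nonneg h0 Y b) with hy | hy
    · simp [← hy]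
    rw [Real.log_mul (ne_of_gt hx) (ne_of_gt hy)]
    ring
  have step : ∀ a, ∑ b, pr μ (fun ω => (X ω, Y ω)) (a, b) *
      Real.log (pr μ (fun ω => (X ω, Y ω)) (a, b))
      = (pr μ X a * Real.log (pr μ X a))
        + pr μ X a * ∑ b, (pr μ Y b * Real.log (pr μ Y b)) := by
    intro a
    simp only [key]
    rw [Finset.sum_add_distrib, ← Finset.sum_mul, ← Finset.mul_sum, pr_total h1]
    ring
  simp only [step]
  rw [Finset.sum_add_distrib, ← Finset.sum_mul, pr_total h1]
  ring

private lemma pr_triple_assoc (A : Ω → α) (B : Ω → β) (C : Ω → γ) (a : α) (b : β) (c : γ) :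
    pr μ (fun ω => (A ω, (B ω, C ω))) (a, (b, c))
      = pr μ (fun ω => ((A ω, B ω), C ω)) ((a, b), c) :=
  pr_eq_of_iff fun ω => by simp [Prod.ext_iff]; tauto

private lemma pr_triple_swap23 (A : Ω → α) (B : Ω → β) (C : Ω → γ) (a : α) (b : β) (c : γ) :
    pr μ (fun ω => (A ω, (B ω, C ω))) (a, (b, c))
      = pr μ (fun ω => ((A ω, C ω), B ω)) ((a, c), b) :=
  pr_eq_of_iff fun ω => by simp [Prod.ext_iff]; tauto

/-- Conditional independence (in factorized form) yields an exact entropy identity. -/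
private lemma ent_condIndep [Fintype α] [Fintype β] [Fintype γ] (h0 : ∀ ω, 0 ≤ μ ω)
    (A : Ω → α) (B : Ω → β) (C : Ω → γ)
    (hf : ∀ a b c, pr μ (fun ω => (A ω, (B ω, C ω))) (a, (b, c)) * pr μ A a
      = pr μ (fun ω => (A ω, B ω)) (a, b) * pr μ (fun ω => (A ω, C ω)) (a, c)) :
    ent μ (fun ω => (A ω, (B ω, C ω))) + ent μ A
      = ent μ (fun ω => (A ω, B ω)) + ent μ (fun ω => (A ω, C ω)) := by
  set q : α → β → γ → ℝ := fun a b c => pr μ (fun ω => (A ω, (B ω, C ω))) (a, (b, c)) with hq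
  have mB : ∀ a b, ∑ c, q a b c = pr μ (fun ω => (A ω, B ω)) (a, b) := by
    intro a b
    simp only [hq, pr_triple_assoc]
    exact pr_marg_right (fun ω => (A ω, B ω)) C (a, b)
  have mC : ∀ a c, ∑ b, q a b c = pr μ (fun ω => (A ω, C ω)) (a, c) := by
    intro a c
    simp only [hq, pr_triple_swap23]
    exact pr_marg_right (fun ω => (A ω, C ω)) B (a, c)
  have mA : ∀ a, ∑ b, ∑ c, q a b c = pr μ A a := by
    intro a
    simp only [mB]
    exact pr_marg_right A B a
  have qnn : ∀ a b c, 0 ≤ q a b c := fun a b c => pr_nonneg h0 _ _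
  have key : ∀ a b c, q a b c * Real.log (q a b c)
      = q a b c * Real.log (pr μ (fun ω => (A ω, B ω)) (a, b))
        + q a b c * Real.log (pr μ (fun ω => (A ω, C ω)) (a, c))
        - q a b c * Real.log (pr μ A a) := by
    intro a b c
    rcases eq_or_lt_of_le (qnn a b c) with hq0 | hq0
    · simp [← hq0]
    have hab : 0 < pr μ (fun ω => (A ω, B ω)) (a, b) := by
      rw [← mB]
      exact lt_of_lt_of_le hq0 (Finset.single_le_sum (fun c _ => qnn a b c) (Finset.mem_univ c))
    have hac : 0 < pr μ (fun ω => (A ω, C ω)) (a, c) := by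
      rw [← mC]
      exact lt_of_lt_of_le hq0 (Finset.single_le_sum (fun b _ => qnn a b c) (Finset.mem_univ b))
    have hA : 0 < pr μ A a := by
      rw [← mA a]
      calc 0 < q a b c := hq0
      _ ≤ ∑ c, q a b c := Finset.single_le_sum (fun c _ => qnn a b c) (Finset.mem_univ c)
      _ ≤ ∑ b, ∑ c, q a b c := Finset.single_le_sum
          (fun b _ => Finset.sum_nonneg fun c _ => qnn a b c) (Finset.mem_univ b)
    have hval : q a b c = pr μ (fun ω => (A ω, B ω)) (a, b)
        * pr μ (fun ω => (A ω, C ω)) (a, c) / pr μ A a := by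
      field_simp
      exact hf a b c
    rw [hval, Real.log_div (by positivity) (ne_of_gt hA),
      Real.log_mul (ne_of_gt hab) (ne_of_gt hac)]
    ring
  unfold ent
  simp only [Fintype.sum_prod_type]
  have fold : ∀ a b c, pr μ (fun ω => (A ω, (B ω, C ω))) (a, (b, c)) = q a b c :=
    fun _ _ _ => rfl
  simp only [fold]
  have expand : ∀ a, ∑ b, ∑ c, q a b c * Real.log (q a b c)
      = ∑ b, (pr μ (fun ω => (A ω, B ω)) (a, b) * Real.log (pr μ (fun ω => (A ω, B ω)) (a, b)))
        + ∑ c, (pr μ (fun ω => (A ω, C ω)) (a, c) * Real.log (pr μ (fun ω => (A ω, C ω)) (a, c)))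
        - pr μ A a * Real.log (pr μ A a) := by
    intro a
    simp only [key]
    have e1 : ∀ b, ∑ c, (q a b c * Real.log (pr μ (fun ω => (A ω, B ω)) (a, b))
        + q a b c * Real.log (pr μ (fun ω => (A ω, C ω)) (a, c))
        - q a b c * Real.log (pr μ A a))
      = pr μ (fun ω => (A ω, B ω)) (a, b) * Real.log (pr μ (fun ω => (A ω, B ω)) (a, b))
        + ∑ c, q a b c * Real.log (pr μ (fun ω => (A ω, C ω)) (a, c))
        - pr μ (fun ω => (A ω, B ω)) (a, b) * Real.log (pr μ A a) := by
      intro b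
      rw [Finset.sum_sub_distrib, Finset.sum_add_distrib, ← Finset.sum_mul, ← Finset.sum_mul,
        mB]
    simp only [e1]
    rw [Finset.sum_sub_distrib, Finset.sum_add_distrib, ← Finset.sum_mul,
      pr_marg_right A B a, Finset.sum_comm]
    congr 2
    refine Finset.sum_congr rfl fun c _ => ?_
    rw [← Finset.sum_mul, mC]
  simp only [expand]
  rw [Finset.sum_sub_distrib, Finset.sum_add_distrib]
  ring

private lemma condEnt_eq_sum [Fintype α] [Fintype γ] (X : Ω → α) (Z : Ω → γ) :
    condEnt μ X Z = ∑ a, ∑ c, pr μ (fun ω => (X ω, Z ω)) (a, c)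
      * (Real.log (pr μ Z c) - Real.log (pr μ (fun ω => (X ω, Z ω)) (a, c))) := by
  unfold condEnt ent
  rw [Fintype.sum_prod_type]
  have hz : ∑ c, pr μ Z c * Real.log (pr μ Z c)
      = ∑ a, ∑ c, pr μ (fun ω => (X ω, Z ω)) (a, c) * Real.log (pr μ Z c) := by
    rw [Finset.sum_comm]
    refine Finset.sum_congr rfl fun c _ => ?_
    rw [← Finset.sum_mul, pr_marg_left X Z c]
  rw [hz]
  simp only [mul_sub, Finset.sum_sub_distrib]
  ring

private lemma condEnt_term_nonneg [Fintype α] [Fintype γ] (h0 : ∀ ω, 0 ≤ μ ω)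
    (X : Ω → α) (Z : Ω → γ) (a : α) (c : γ) :
    0 ≤ pr μ (fun ω => (X ω, Z ω)) (a, c)
      * (Real.log (pr μ Z c) - Real.log (pr μ (fun ω => (X ω, Z ω)) (a, c))) := by
  rcases eq_or_lt_of_le (pr_nonneg h0 (fun ω => (X ω, Z ω)) (a, c)) with h | h
  · rw [← h]; simp
  have hle : pr μ (fun ω => (X ω, Z ω)) (a, c) ≤ pr μ Z c := by
    rw [← pr_marg_left X Z c]
    exact Finset.single_le_sum (f := fun a' => pr μ (fun ω => (X ω, Z ω)) (a', c))
      (fun a' _ => pr_nonneg h0 _ _) (Finset.mem_univ a)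
  have hlog : Real.log (pr μ (fun ω => (X ω, Z ω)) (a, c)) ≤ Real.log (pr μ Z c) :=
    Real.log_le_log h hle
  nlinarith

private lemma det_of_condEnt_zero [Fintype α] [Fintype γ] (h0 : ∀ ω, 0 ≤ μ ω)
    (X : Ω → α) (Z : Ω → γ) (h : condEnt μ X Z = 0) :
    ∀ a c, pr μ (fun ω => (X ω, Z ω)) (a, c) = 0
      ∨ pr μ (fun ω => (X ω, Z ω)) (a, c) = pr μ Z c := by
  intro a c
  rw [condEnt_eq_sum] at h
  have hterm : ∀ a' c', pr μ (fun ω => (X ω, Z ω)) (a', c')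
      * (Real.log (pr μ Z c') - Real.log (pr μ (fun ω => (X ω, Z ω)) (a', c'))) = 0 := by
    have hall := (Finset.sum_eq_zero_iff_of_nonneg
      (fun a _ => Finset.sum_nonneg fun c _ => condEnt_term_nonneg h0 X Z a c)).1 h
    intro a' c'
    have := (Finset.sum_eq_zero_iff_of_nonneg
      (fun c _ => condEnt_term_nonneg h0 X Z a' c)).1 (hall a' (Finset.mem_univ a'))
    exact this c' (Finset.mem_univ c')
  rcases eq_or_lt_of_le (pr_nonneg h0 (fun ω => (X ω, Z ω)) (a, c)) with hp | hp
  · exact Or.inl hp.symm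
  right
  have hlog : Real.log (pr μ Z c) = Real.log (pr μ (fun ω => (X ω, Z ω)) (a, c)) := by
    rcases mul_eq_zero.1 (hterm a c) with h1 | h1
    · exact absurd h1 (ne_of_gt hp)
    · linarith [sub_eq_zero.1 h1]
  have hle : pr μ (fun ω => (X ω, Z ω)) (a, c) ≤ pr μ Z c := by
    rw [← pr_marg_left X Z c]
    exact Finset.single_le_sum (f := fun a' => pr μ (fun ω => (X ω, Z ω)) (a', c))
      (fun a' _ => pr_nonneg h0 _ _) (Finset.mem_univ a)
  have hzpos : 0 < pr μ Z c := lt_of_lt_of_le hp hle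
  have hexp := Real.exp_log hp
  rw [← hlog, Real.exp_log hzpos] at hexp
  exact hexp.symm

private lemma condEnt_zero_lift [Fintype α] [Fintype β] [Fintype γ] (h0 : ∀ ω, 0 ≤ μ ω)
    (X : Ω → α) (Z : Ω → γ) (Y : Ω → β)
    (hdet : ∀ a c, pr μ (fun ω => (X ω, Z ω)) (a, c) = 0
      ∨ pr μ (fun ω => (X ω, Z ω)) (a, c) = pr μ Z c) :
    ent μ (fun ω => (X ω, (Z ω, Y ω))) = ent μ (fun ω => (Z ω, Y ω)) := by
  have h : condEnt μ X (fun ω => (Z ω, Y ω)) = 0 := by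
    rw [condEnt_eq_sum]
    apply Finset.sum_eq_zero
    intro a _
    apply Finset.sum_eq_zero
    rintro ⟨c, b⟩ _
    rcases eq_or_lt_of_le (pr_nonneg h0 (fun ω => (X ω, (Z ω, Y ω))) (a, (c, b))) with hp | hp
    · rw [← hp]; ring
    have hXZpos : 0 < pr μ (fun ω => (X ω, Z ω)) (a, c) := by
      have h1 : pr μ (fun ω => (X ω, (Z ω, Y ω))) (a, (c, b))
          = pr μ (fun ω => ((X ω, Z ω), Y ω)) ((a, c), b) :=
        pr_eq_of_iff fun ω => by simp [Prod.ext_iff]; tauto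
      have h2 : pr μ (fun ω => ((X ω, Z ω), Y ω)) ((a, c), b)
          ≤ pr μ (fun ω => (X ω, Z ω)) (a, c) := by
        rw [← pr_marg_right (fun ω => (X ω, Z ω)) Y (a, c)]
        exact Finset.single_le_sum
          (f := fun b' => pr μ (fun ω => ((X ω, Z ω), Y ω)) ((a, c), b'))
          (fun b' _ => pr_nonneg h0 _ _) (Finset.mem_univ b)
      rw [h1] at hp
      exact lt_of_lt_of_le hp h2
    have hXZ : pr μ (fun ω => (X ω, Z ω)) (a, c) = pr μ Z c :=
      (hdet a c).resolve_left (ne_of_gt hXZpos)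
    have hz : ∀ a' ∈ Finset.univ, a' ≠ a → pr μ (fun ω => (X ω, Z ω)) (a', c) = 0 := by
      have hsum : ∑ a', pr μ (fun ω => (X ω, Z ω)) (a', c) = pr μ Z c := pr_marg_left X Z c
      have hzero : ∑ a' ∈ Finset.univ.erase a, pr μ (fun ω => (X ω, Z ω)) (a', c) = 0 := by
        have hra := Finset.add_sum_erase Finset.univ
          (fun a' => pr μ (fun ω => (X ω, Z ω)) (a', c)) (Finset.mem_univ a)
        rw [← hsum] at hXZ
        linarith [hra]
      intro a' _ ha'
      have := (Finset.sum_eq_zero_iff_of_nonneg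
        (fun a' _ => pr_nonneg h0 (fun ω => (X ω, Z ω)) (a', c))).1 hzero
      exact this a' (Finset.mem_erase.2 ⟨ha', Finset.mem_univ a'⟩)
    have hZY : pr μ (fun ω => (Z ω, Y ω)) (c, b)
        = pr μ (fun ω => (X ω, (Z ω, Y ω))) (a, (c, b)) := by
      rw [← pr_marg_left X (fun ω => (Z ω, Y ω)) (c, b)]
      rw [Finset.sum_eq_single a]
      · intro a' _ ha'
        have h1 : pr μ (fun ω => (X ω, (Z ω, Y ω))) (a', (c, b))
            = pr μ (fun ω => ((X ω, Z ω), Y ω)) ((a', c), b) :=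
          pr_eq_of_iff fun ω => by simp [Prod.ext_iff]; tauto
        have h2 : pr μ (fun ω => ((X ω, Z ω), Y ω)) ((a', c), b)
            ≤ pr μ (fun ω => (X ω, Z ω)) (a', c) := by
          rw [← pr_marg_right (fun ω => (X ω, Z ω)) Y (a', c)]
          exact Finset.single_le_sum
            (f := fun b' => pr μ (fun ω => ((X ω, Z ω), Y ω)) ((a', c), b'))
            (fun b' _ => pr_nonneg h0 _ _) (Finset.mem_univ b)
        have h3 := pr_nonneg h0 (fun ω => (X ω, (Z ω, Y ω))) (a', (c, b))
        rw [hz a' (Finset.mem_univ a') ha'] at h2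
        rw [h1]
        linarith
      · intro ha; exact absurd (Finset.mem_univ a) ha
    rw [← hZY]
    ring
  unfold condEnt at h
  linarith

private lemma indep_marg [Fintype γ] (X : Ω → α) (Y : Ω → β) (Z : Ω → γ)
    (h : IndepRV μ X (fun ω => (Y ω, Z ω))) : IndepRV μ X Y := by
  intro a b
  rw [← pr_marg_right (fun ω => (X ω, Y ω)) Z (a, b)]
  have e : ∀ c, pr μ (fun ω => ((X ω, Y ω), Z ω)) ((a, b), c)
      = pr μ X a * pr μ (fun ω => (Y ω, Z ω)) (b, c) := fun c => by
    rw [← h a (b, c)]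
    exact pr_eq_of_iff fun ω => by simp [Prod.ext_iff]; tauto
  simp only [e]
  rw [← Finset.mul_sum, pr_marg_right Y Z b]

end nibHelpers

/-- **Lemma 1.** If `ε` is independent of `(x̂, y)`, `I(x; y) = I(x̂; y)`,
`(ẑ, ẑₙ) := f₀(x̂, ε)` satisfies `H(x̂ | (ẑ, ẑₙ)) = 0`, and `ẑₙ` is independent of
`(ẑ, y)`, then `I(ẑ; y) = I(x; y)`. -/
theorem lemma1_nib {Ω Xv Xhv Yv Ev Zv Znv : Type*}
    [Fintype Ω] [Nonempty Ω] [Fintype Xv] [Nonempty Xv] [Fintype Xhv] [Nonempty Xhv]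
    [Fintype Yv] [Nonempty Yv] [Fintype Ev] [Nonempty Ev]
    [Fintype Zv] [Nonempty Zv] [Fintype Znv] [Nonempty Znv]
    (μ : Ω → ℝ) (hμ : IsPMF μ)
    (x : Ω → Xv) (xh : Ω → Xhv) (y : Ω → Yv) (ε : Ω → Ev)
    (hInd : IndepRV μ ε (fun ω => (xh ω, y ω)))
    (hI : mi μ x y = mi μ xh y)
    (f₀ : Xhv → Ev → Zv × Znv)
    (zh : Ω → Zv) (znh : Ω → Znv)
    (hzh : ∀ ω, zh ω = (f₀ (xh ω) (ε ω)).1)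
    (hznh : ∀ ω, znh ω = (f₀ (xh ω) (ε ω)).2)
    (ha : condEnt μ xh (fun ω => (zh ω, znh ω)) = 0)
    (hb : IndepRV μ znh (fun ω => (zh ω, y ω))) :
    mi μ zh y = mi μ x y := by
  obtain ⟨h0, h1⟩ := hμ
  -- the joint latent variable
  have hW : ∀ ω, (zh ω, znh ω) = f₀ (xh ω) (ε ω) := by
    intro ω
    rw [hzh ω, hznh ω]
  -- F1 : independence of znh and zh
  have hbz : IndepRV μ znh zh := indep_marg znh zh y hb
  have F1 : ent μ (fun ω => (znh ω, zh ω)) = ent μ znh + ent μ zh :=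
    ent_indep h0 h1 znh zh hbz
  have F2 : ent μ (fun ω => (znh ω, (zh ω, y ω))) = ent μ znh + ent μ (fun ω => (zh ω, y ω)) :=
    ent_indep h0 h1 znh (fun ω => (zh ω, y ω)) hb
  have F3 : ent μ (fun ω => (zh ω, znh ω)) = ent μ (fun ω => (znh ω, zh ω)) :=
    ent_swap zh znh
  have F4 : ent μ (fun ω => ((zh ω, znh ω), y ω)) = ent μ (fun ω => (znh ω, (zh ω, y ω))) := by
    have hinj : Function.Injective
        (fun p : Znv × (Zv × Yv) => ((p.2.1, p.1), p.2.2)) := by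
      rintro ⟨p1, p2, p3⟩ ⟨q1, q2, q3⟩ h
      simp_all [Prod.ext_iff]
    exact (ent_comp (fun ω => (znh ω, (zh ω, y ω)))
      (fun p : Znv × (Zv × Yv) => ((p.2.1, p.1), p.2.2)) hinj : _)
  have F5 : ent μ (fun ω => (xh ω, (zh ω, znh ω))) = ent μ (fun ω => (zh ω, znh ω)) := by
    unfold condEnt at ha
    linarith
  have hdet := det_of_condEnt_zero h0 xh (fun ω => (zh ω, znh ω)) ha
  have F6 : ent μ (fun ω => (xh ω, ((zh ω, znh ω), y ω)))
      = ent μ (fun ω => ((zh ω, znh ω), y ω)) :=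
    condEnt_zero_lift h0 xh (fun ω => (zh ω, znh ω)) y hdet
  -- conditional independence of (zh, znh) and y given xh
  have hq : ∀ a w b, pr μ (fun ω => (xh ω, ((zh ω, znh ω), y ω))) (a, (w, b))
      = (∑ c, if f₀ a c = w then pr μ ε c else 0)
        * pr μ (fun ω => (xh ω, y ω)) (a, b) := by
    intro a w b
    have step1 : pr μ (fun ω => (xh ω, ((zh ω, znh ω), y ω))) (a, (w, b))
        = ∑ c, (if f₀ a c = w
            then pr μ (fun ω => (ε ω, (xh ω, y ω))) (c, (a, b)) else 0) := by
      unfold pr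
      have push : ∀ (P : Prop) [Decidable P] (g : Ω → ℝ),
          (if P then ∑ ω, g ω else 0) = ∑ ω, if P then g ω else 0 := by
        intro P _ g; split <;> simp
      simp only [push]
      rw [Finset.sum_comm]
      refine Finset.sum_congr rfl fun ω _ => ?_
      rw [Finset.sum_eq_single (ε ω)]
      · by_cases hx : xh ω = a
        · by_cases hyb : y ω = b <;>
            simp [Prod.ext_iff, hx, hyb, hW ω]
        · simp [Prod.ext_iff, hx]
      · intro c _ hc
        split
        · rw [if_neg]; simp [Prod.ext_iff]; intro h; exact absurd h.symm hc
        · rfl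
      · intro hε; exact absurd (Finset.mem_univ (ε ω)) hε
    rw [step1, Finset.sum_mul]
    refine Finset.sum_congr rfl fun c _ => ?_
    split
    · rw [hInd c (a, b)]
    · rw [zero_mul]
  have hf : ∀ a w b, pr μ (fun ω => (xh ω, ((zh ω, znh ω), y ω))) (a, (w, b)) * pr μ xh a
      = pr μ (fun ω => (xh ω, (zh ω, znh ω))) (a, w)
        * pr μ (fun ω => (xh ω, y ω)) (a, b) := by
    intro a w b
    have hp : pr μ (fun ω => (xh ω, (zh ω, znh ω))) (a, w)
        = (∑ c, if f₀ a c = w then pr μ ε c else 0) * pr μ xh a := by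
      rw [← pr_marg_right (fun ω => (xh ω, (zh ω, znh ω))) y (a, w)]
      have e : ∀ b', pr μ (fun ω => ((xh ω, (zh ω, znh ω)), y ω)) ((a, w), b')
          = pr μ (fun ω => (xh ω, ((zh ω, znh ω), y ω))) (a, (w, b')) :=
        fun b' => pr_eq_of_iff fun ω => by simp [Prod.ext_iff]; tauto
      simp only [e, hq]
      rw [← Finset.mul_sum, pr_marg_right xh y a]
    rw [hq a w b, hp]
    ring
  have F7 : ent μ (fun ω => (xh ω, ((zh ω, znh ω), y ω))) + ent μ xh
      = ent μ (fun ω => (xh ω, (zh ω, znh ω))) + ent μ (fun ω => (xh ω, y ω)) :=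
    ent_condIndep h0 xh (fun ω => (zh ω, znh ω)) y hf
  rw [hI]
  unfold mi
  linarith
end

section
/- Let Z and Y be random variables taking values in finite nonempty types on a common probability space with joint law P, and for each value z of Z let q(·|z) be a probability mass function on the value type of Y with q(y|z) > 0 whenever P(Z = z, Y = y) > 0. Then I(Z; Y) − H(Y) − E[log q(Y | Z)] = Σ_z P(Z = z) · KL(P_{Y|Z=z} ‖ q(·|z)) ≥ 0; in particular, I(Z; Y) ≥ E[log q(Y | Z)] + H(Y). -/
open Classical Finset Real

lemma aux_log_ineq {r s : ℝ} (hr : 0 ≤ r) (hs0 : 0 ≤ s) (h : 0 < r → 0 < s) :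
    r - s ≤ r * Real.log (r / s) := by
  rcases eq_or_lt_of_le hr with h0 | h0
  · simp only [← h0, zero_mul, zero_sub]; linarith
  · have hs := h h0
    have hd : 0 < s / r := div_pos hs h0
    have h1 : Real.log (s / r) ≤ s / r - 1 := Real.log_le_sub_one_of_pos hd
    have hlog : Real.log (r / s) = -Real.log (s / r) := by
      rw [← Real.log_inv]; congr 1; field_simp
    have h2 : r * Real.log (s / r) ≤ r * (s / r - 1) :=
      mul_le_mul_of_nonneg_left h1 h0.le
    have h3 : r * (s / r - 1) = s - r := by field_simp
    rw [hlog]; nlinarith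

lemma aux_KL_nonneg {α : Type*} [Fintype α] (p q : α → ℝ)
    (hp : ∀ x, 0 ≤ p x) (hq0 : ∀ x, 0 ≤ q x) (hps : ∑ x, p x = 1) (hqs : ∑ x, q x = 1)
    (h : ∀ x, 0 < p x → 0 < q x) : 0 ≤ KL p q := by
  have hsum : ∑ x, (p x - q x) ≤ ∑ x, p x * Real.log (p x / q x) :=
    Finset.sum_le_sum fun x _ => aux_log_ineq (hp x) (hq0 x) (h x)
  have : ∑ x, (p x - q x) = 0 := by
    rw [Finset.sum_sub_distrib, hps, hqs]; ring
  unfold KL; linarith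

lemma aux_push {Ω α : Type*} [Fintype Ω] [Fintype α] (μ : Ω → ℝ) (W : Ω → α) (g : α → ℝ) :
    ∑ ω, μ ω * g (W ω) = ∑ a, pr μ W a * g a := by
  unfold pr
  simp_rw [Finset.sum_mul, ite_mul, zero_mul]
  rw [Finset.sum_comm]
  apply Finset.sum_congr rfl
  intro ω _
  simp

lemma aux_marg {Ω α β : Type*} [Fintype Ω] [Fintype α] [Fintype β]
    (μ : Ω → ℝ) (Z : Ω → α) (Y : Ω → β) (z : α) :
    pr μ Z z = ∑ y, pr μ (fun ω => (Z ω, Y ω)) (z, y) := by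
  unfold pr
  rw [Finset.sum_comm]
  apply Finset.sum_congr rfl
  intro ω _
  by_cases h : Z ω = z <;> simp [Prod.ext_iff, h]

lemma aux_pr_nonneg {Ω α : Type*} [Fintype Ω] (μ : Ω → ℝ) (hμ : ∀ ω, 0 ≤ μ ω)
    (W : Ω → α) (a : α) : 0 ≤ pr μ W a := by
  unfold pr
  apply Finset.sum_nonneg
  intro ω _
  by_cases h : W ω = a <;> simp [h, hμ ω]

lemma aux_term_eq (pzy pZ qv : ℝ) (hp : 0 ≤ pzy) (hle : pzy ≤ pZ)
    (hq : 0 < pzy → 0 < qv) :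
    pzy * (Real.log pzy - Real.log pZ - Real.log qv)
      = pZ * ((pzy / pZ) * Real.log ((pzy / pZ) / qv)) := by
  rcases eq_or_lt_of_le hp with h0 | h0
  · simp [← h0]
  · have hPZ : 0 < pZ := lt_of_lt_of_le h0 hle
    have hqv := hq h0
    rw [Real.log_div (div_ne_zero (ne_of_gt h0) (ne_of_gt hPZ)) (ne_of_gt hqv),
      Real.log_div (ne_of_gt h0) (ne_of_gt hPZ)]
    field_simp

/-- Variational lower bound on `I(Z; Y)` via an approximate decoder `q(y|z)`:
`I(Z; Y) - H(Y) - E[log q(Y|Z)]` equals the average KL divergence between the true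
conditional `P(Y | Z = z)` and `q(·|z)`, which is nonnegative; hence
`I(Z; Y) ≥ E[log q(Y|Z)] + H(Y)`. -/
theorem vib_decoder_lower_bound {Ω Zv Yv : Type*}
    [Fintype Ω] [Nonempty Ω] [Fintype Zv] [Nonempty Zv] [Fintype Yv] [Nonempty Yv]
    (μ : Ω → ℝ) (hμ : IsPMF μ)
    (Z : Ω → Zv) (Y : Ω → Yv)
    (q : Zv → Yv → ℝ) (hq : ∀ z, IsPMF (q z))
    (hqpos : ∀ z yv, 0 < pr μ (fun ω => (Z ω, Y ω)) (z, yv) → 0 < q z yv) :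
    mi μ Z Y - ent μ Y - (∑ ω, μ ω * Real.log (q (Z ω) (Y ω)))
      = ∑ z, pr μ Z z *
          KL (fun yv => pr μ (fun ω => (Z ω, Y ω)) (z, yv) / pr μ Z z) (q z) ∧
    0 ≤ ∑ z, pr μ Z z *
          KL (fun yv => pr μ (fun ω => (Z ω, Y ω)) (z, yv) / pr μ Z z) (q z) ∧
    (∑ ω, μ ω * Real.log (q (Z ω) (Y ω))) + ent μ Y ≤ mi μ Z Y := by
  set p : Zv → Yv → ℝ := fun z y => pr μ (fun ω => (Z ω, Y ω)) (z, y) with hp_def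
  have hpnn : ∀ z y, 0 ≤ p z y := fun z y => aux_pr_nonneg μ hμ.1 _ _
  have hmarg : ∀ z, pr μ Z z = ∑ y, p z y := fun z => aux_marg μ Z Y z
  have hZnn : ∀ z, 0 ≤ pr μ Z z := fun z => aux_pr_nonneg μ hμ.1 _ _
  have hple : ∀ z y, p z y ≤ pr μ Z z := by
    intro z y
    rw [hmarg z]
    exact Finset.single_le_sum (fun y _ => hpnn z y) (Finset.mem_univ y)
  -- the first equality
  have key : mi μ Z Y - ent μ Y - (∑ ω, μ ω * Real.log (q (Z ω) (Y ω)))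
      = ∑ z, pr μ Z z * KL (fun yv => p z yv / pr μ Z z) (q z) := by
    have hE : (∑ ω, μ ω * Real.log (q (Z ω) (Y ω)))
        = ∑ z, ∑ y, p z y * Real.log (q z y) := by
      have := aux_push μ (fun ω => (Z ω, Y ω)) (fun a => Real.log (q a.1 a.2))
      simpa [Fintype.sum_prod_type] using this
    have hJoint : ent μ (fun ω => (Z ω, Y ω))
        = -∑ z, ∑ y, p z y * Real.log (p z y) := by
      unfold ent
      rw [Fintype.sum_prod_type]
    have hEntZ : ent μ Z = -∑ z, ∑ y, p z y * Real.log (pr μ Z z) := by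
      unfold ent
      congr 1
      apply Finset.sum_congr rfl
      intro z _
      rw [hmarg z, Finset.sum_mul]
    have expand : ∑ z, ∑ y, p z y * (Real.log (p z y) - Real.log (pr μ Z z)
          - Real.log (q z y))
        = (∑ z, ∑ y, p z y * Real.log (p z y))
          - (∑ z, ∑ y, p z y * Real.log (pr μ Z z))
          - (∑ z, ∑ y, p z y * Real.log (q z y)) := by
      rw [← Finset.sum_sub_distrib, ← Finset.sum_sub_distrib]
      apply Finset.sum_congr rfl
      intro z _
      rw [← Finset.sum_sub_distrib, ← Finset.sum_sub_distrib]
      apply Finset.sum_congr rfl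
      intro y _
      ring
    have lhs_eq : mi μ Z Y - ent μ Y - (∑ ω, μ ω * Real.log (q (Z ω) (Y ω)))
        = ∑ z, ∑ y, p z y * (Real.log (p z y) - Real.log (pr μ Z z)
            - Real.log (q z y)) := by
      have hmi : mi μ Z Y - ent μ Y = ent μ Z - ent μ (fun ω => (Z ω, Y ω)) := by
        unfold mi; ring
      rw [sub_sub, ← sub_sub, hmi, hEntZ, hJoint, hE, expand]
      ring
    have rhs_eq : ∀ z, pr μ Z z * KL (fun yv => p z yv / pr μ Z z) (q z)
        = ∑ y, p z y * (Real.log (p z y) - Real.log (pr μ Z z)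
            - Real.log (q z y)) := by
      intro z
      unfold KL
      rw [Finset.mul_sum]
      apply Finset.sum_congr rfl
      intro y _
      exact (aux_term_eq (p z y) (pr μ Z z) (q z y) (hpnn z y) (hple z y)
        (hqpos z y)).symm
    rw [lhs_eq]
    exact (Finset.sum_congr rfl fun z _ => rhs_eq z).symm
  have nonneg : 0 ≤ ∑ z, pr μ Z z * KL (fun yv => p z yv / pr μ Z z) (q z) := by
    apply Finset.sum_nonneg
    intro z _
    rcases eq_or_lt_of_le (hZnn z) with h0 | h0
    · simp [← h0]
    · apply mul_nonneg h0.le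
      apply aux_KL_nonneg
      · intro y; exact div_nonneg (hpnn z y) h0.le
      · exact (hq z).1
      · rw [← Finset.sum_div, ← hmarg z, div_self (ne_of_gt h0)]
      · exact (hq z).2
      · intro y hy
        apply hqpos z y
        have := mul_pos hy h0
        rwa [div_mul_cancel₀ _ (ne_of_gt h0)] at this
  exact ⟨key, nonneg, by linarith⟩
end

section
/- Let p and q be probability mass functions on a finite nonempty type 𝒳, and for a function D : 𝒳 → (0, 1) define V(D) := Σ_x p(x) · log(D(x)) + Σ_x q(x) · log(1 − D(x)) (natural logarithm). Let D* : 𝒳 → (0, 1) be any function satisfying D*(x) = p(x) / (p(x) + q(x)) for every x with p(x) + q(x) > 0. Then V(D) ≤ V(D*) for every D : 𝒳 → (0, 1). -/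
open Classical Finset Real

/-! For each point the objective is a two-point cross entropy `a log D + b log (1 - D)`, and the
tangent-line bound `log t ≤ t - 1`, applied at `t = (a + b) D / a` and `t = (a + b) (1 - D) / b`,
shows it is at most its value at `D = a / (a + b)`. -/

lemma mul_log_le_mul_log_div_add {a c x : ℝ} (ha : 0 ≤ a) (hc : 0 < c) (hx : 0 < x) :
    a * log x ≤ a * log (a / c) + c * x - a := by
  rcases ha.eq_or_lt with rfl | ha
  · simpa using (mul_pos hc hx).le
  have tangent := log_le_sub_one_of_pos (show 0 < c * x / a by positivity)
  have split : log (c * x / a) = log x - log (a / c) := by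
    rw [← log_div hx.ne' (by positivity)]
    congr 1
    field_simp
  have scaled : a * (c * x / a - 1) = c * x - a := by field_simp
  have key := mul_le_mul_of_nonneg_left tangent ha.le
  rw [split, scaled] at key
  linarith

lemma mul_log_add_mul_log_one_sub_le {a b D : ℝ} (ha : 0 ≤ a) (hb : 0 ≤ b)
    (hD0 : 0 < D) (hD1 : D < 1) :
    a * log D + b * log (1 - D) ≤ a * log (a / (a + b)) + b * log (1 - a / (a + b)) := by
  rcases (add_nonneg ha hb).eq_or_lt with hzero | hs
  · obtain ⟨rfl, rfl⟩ := (add_eq_zero_iff_of_nonneg ha hb).1 hzero.symm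
    simp
  have hcompl : 1 - a / (a + b) = b / (a + b) := by field_simp; ring
  rw [hcompl]
  linarith [mul_log_le_mul_log_div_add ha hs hD0, mul_log_le_mul_log_div_add hb hs (sub_pos.2 hD1)]

theorem gan_optimal_discriminator_general {X : Type*} [Fintype X]
    (p q : X → ℝ) (hp : IsPMF p) (hq : IsPMF q)
    (Dstar : X → ℝ)
    (hDstar : ∀ x, 0 < p x + q x → Dstar x = p x / (p x + q x)) :
    ∀ D : X → ℝ, (∀ x, 0 < D x) → (∀ x, D x < 1) →
      (∑ x, p x * Real.log (D x)) + (∑ x, q x * Real.log (1 - D x))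
        ≤ (∑ x, p x * Real.log (Dstar x)) + (∑ x, q x * Real.log (1 - Dstar x)) := by
  intro D hD0 hD1
  rw [← sum_add_distrib, ← sum_add_distrib]
  refine sum_le_sum fun x _ => ?_
  rcases (add_nonneg (hp.1 x) (hq.1 x)).eq_or_lt with hzero | hpos
  · obtain ⟨hpx, hqx⟩ := (add_eq_zero_iff_of_nonneg (hp.1 x) (hq.1 x)).1 hzero.symm
    simp [hpx, hqx]
  · rw [hDstar x hpos]
    exact mul_log_add_mul_log_one_sub_le (hp.1 x) (hq.1 x) (hD0 x) (hD1 x)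

/-- Optimal GAN discriminator: for fixed distributions `p` (data) and `q`
(generator), the discriminator objective `V(D)` is maximized at
`D* = p / (p + q)`. -/
theorem gan_optimal_discriminator {X : Type*} [Fintype X] [Nonempty X]
    (p q : X → ℝ) (hp : IsPMF p) (hq : IsPMF q)
    (Dstar : X → ℝ) (hDs0 : ∀ x, 0 < Dstar x) (hDs1 : ∀ x, Dstar x < 1)
    (hDstar : ∀ x, 0 < p x + q x → Dstar x = p x / (p x + q x)) :
    ∀ D : X → ℝ, (∀ x, 0 < D x) → (∀ x, D x < 1) →
      (∑ x, p x * Real.log (D x)) + (∑ x, q x * Real.log (1 - D x))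
        ≤ (∑ x, p x * Real.log (Dstar x)) + (∑ x, q x * Real.log (1 - Dstar x)) :=
  gan_optimal_discriminator_general p q hp hq Dstar hDstar
end

section
/- Let p and q be probability mass functions on a finite nonempty type 𝒳, let m := (p + q)/2, and define JSD(p, q) := (1/2)·KL(p ‖ m) + (1/2)·KL(q ‖ m). Then JSD(p, q) ≥ 0, with JSD(p, q) = 0 if and only if p = q. Consequently, the value −log 4 + 2 · JSD(p, q) of the GAN objective at the optimal discriminator, viewed as a function of q for fixed p, is minimized exactly when q = p, with minimum value −log 4. -/
open Classical Finset Real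

lemma kl_term_le {a b : ℝ} (ha : 0 ≤ a) (hb : 0 ≤ b) (hab : 0 < a → 0 < b) :
    a - b ≤ a * Real.log (a / b) := by
  rcases ha.eq_or_lt with h | h
  · simp [← h]; linarith
  · have hb' := hab h
    have hlog := Real.log_le_sub_one_of_pos (div_pos hb' h)
    have hrw : Real.log (a / b) = - Real.log (b / a) := by
      rw [← Real.log_inv, inv_div]
    have hba : a * (b / a) = b := by field_simp
    rw [hrw]
    nlinarith [mul_le_mul_of_nonneg_left hlog h.le]

lemma kl_term_eq {a b : ℝ} (ha : 0 ≤ a) (hb : 0 ≤ b) (hab : 0 < a → 0 < b)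
    (heq : a * Real.log (a / b) = a - b) : a = b := by
  rcases ha.eq_or_lt with h | h
  · rw [← h] at heq ⊢; simp at heq; linarith
  · have hb' := hab h
    by_contra hne
    have hba : b / a ≠ 1 := by
      intro h1
      exact hne ((div_eq_one_iff_eq (ne_of_gt h)).mp h1).symm
    have hlog := Real.log_lt_sub_one_of_pos (div_pos hb' h) hba
    have hrw : Real.log (a / b) = - Real.log (b / a) := by
      rw [← Real.log_inv, inv_div]
    have hba2 : a * (b / a) = b := by field_simp
    rw [hrw] at heq
    nlinarith [mul_lt_mul_of_pos_left hlog h]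

lemma kl_key {α : Type*} [Fintype α] (p m : α → ℝ) (hp0 : ∀ x, 0 ≤ p x)
    (hm0 : ∀ x, 0 ≤ m x) (hs : ∑ x, p x = ∑ x, m x)
    (hpm : ∀ x, 0 < p x → 0 < m x) :
    0 ≤ KL p m ∧ (KL p m = 0 → p = m) := by
  have hterm : ∀ x, p x - m x ≤ p x * Real.log (p x / m x) := fun x =>
    kl_term_le (hp0 x) (hm0 x) (hpm x)
  have hsum0 : ∑ x, (p x - m x) = 0 := by
    rw [Finset.sum_sub_distrib, hs, sub_self]
  have hge : 0 ≤ KL p m := by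
    unfold KL
    calc (0:ℝ) = ∑ x, (p x - m x) := hsum0.symm
    _ ≤ ∑ x, p x * Real.log (p x / m x) :=
      Finset.sum_le_sum (fun x _ => hterm x)
  refine ⟨hge, fun h0 => ?_⟩
  have hz : ∑ x, (p x * Real.log (p x / m x) - (p x - m x)) = 0 := by
    rw [Finset.sum_sub_distrib, hsum0, sub_zero]
    exact h0
  have := (Finset.sum_eq_zero_iff_of_nonneg
    (fun x _ => by linarith [hterm x])).mp hz
  funext x
  have hx := this x (Finset.mem_univ x)
  exact kl_term_eq (hp0 x) (hm0 x) (hpm x) (by linarith)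

lemma kl_self_zero {α : Type*} [Fintype α] (p : α → ℝ) : KL p p = 0 := by
  unfold KL
  apply Finset.sum_eq_zero
  intro x _
  rcases eq_or_ne (p x) 0 with h | h
  · simp [h]
  · rw [div_self h, Real.log_one, mul_zero]

lemma jsd_self {α : Type*} [Fintype α] (p : α → ℝ) : JSD p p = 0 := by
  unfold JSD
  have : (fun x => (p x + p x) / 2) = p := by funext x; ring
  rw [this, kl_self_zero]
  ring

lemma jsd_main {α : Type*} [Fintype α] (p q : α → ℝ) (hp : IsPMF p) (hq : IsPMF q) :
    0 ≤ JSD p q ∧ (JSD p q = 0 ↔ p = q) := by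
  set m : α → ℝ := fun x => (p x + q x) / 2 with hm
  have hm0 : ∀ x, 0 ≤ m x := fun x => by
    have := hp.1 x; have := hq.1 x; simp only [hm]; linarith
  have hsm : ∑ x, m x = 1 := by
    simp only [hm]
    rw [show (fun x => (p x + q x) / 2) = (fun x => p x / 2 + q x / 2) by funext x; ring]
    rw [Finset.sum_add_distrib, ← Finset.sum_div, ← Finset.sum_div, hp.2, hq.2]
    norm_num
  have h1 := kl_key p m hp.1 hm0 (by rw [hp.2, hsm])
    (fun x hx => by have := hq.1 x; simp only [hm]; linarith)
  have h2 := kl_key q m hq.1 hm0 (by rw [hq.2, hsm])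
    (fun x hx => by have := hp.1 x; simp only [hm]; linarith)
  have hnn : 0 ≤ JSD p q := by
    unfold JSD; rw [← hm]; linarith [h1.1, h2.1]
  refine ⟨hnn, ?_, fun h => by rw [h]; exact jsd_self q⟩
  intro h0
  have hJ : (1/2) * KL p m + (1/2) * KL q m = 0 := by
    unfold JSD at h0; rw [← hm] at h0; exact h0
  have hk1 : KL p m = 0 := by linarith [h1.1, h2.1]
  have hpm := h1.2 hk1
  funext x
  have := congrFun hpm x
  simp only [hm] at this
  linarith

/-- Properties of the Jensen–Shannon divergence: `JSD(p, q) ≥ 0` with equality iff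
`p = q`; consequently `-log 4 + 2·JSD(p, q)`, as a function of the generator
distribution `q`, is minimized exactly at `q = p`, with minimum value `-log 4`. -/
theorem jsd_nonneg_eq_zero_iff {X : Type*} [Fintype X] [Nonempty X]
    (p q : X → ℝ) (hp : IsPMF p) (hq : IsPMF q) :
    0 ≤ JSD p q ∧
    (JSD p q = 0 ↔ p = q) ∧
    (-Real.log 4 + 2 * JSD p p = -Real.log 4) ∧
    (∀ q' : X → ℝ, IsPMF q' →
      -Real.log 4 + 2 * JSD p p ≤ -Real.log 4 + 2 * JSD p q') ∧
    (-Real.log 4 + 2 * JSD p q = -Real.log 4 ↔ q = p) := by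
  obtain ⟨hnn, hiff⟩ := jsd_main p q hp hq
  have hself : JSD p p = 0 := jsd_self p
  refine ⟨hnn, hiff, by rw [hself]; ring, ?_, ?_⟩
  · intro q' hq'
    have := (jsd_main p q' hp hq').1
    rw [hself]; linarith
  · constructor
    · intro h
      have : JSD p q = 0 := by linarith
      exact (hiff.mp this).symm
    · intro h
      rw [h, jsd_self]; ring
end
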